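/- Let φ(t) = exp(−∫₀ᵗ (δ(r) + μ(r) + ν'(r)) dr) with δ, μ, ν' continuous, and let V, V* be differentiable on [0,n] with V(0) = V*(0) and V(n) = V*(n). Suppose d/dt(φ·V)(t) = −φ(t)·ν'(t)·V(t) + φ(t)·(P(t) − μ(t)·S(t)) and d/dt(φ·V*)(t) = −φ(t)·(ν'(t) − ν(t))·V*(t) + φ(t)·(P*(t) − μ(t)·S(t) − ν(t)·C(t)). Then ∫₀ⁿ φ·(P − P*) dt = ∫₀ⁿ φ·ν'·(V − V*) dt + ∫₀ⁿ φ·ν·(V* − C) dt. -/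

import Mathlib

/-!
Put `F = φ·V - φ·V*`. Subtracting the two Thiele-type derivative identities, the terms
`φ μ S` cancel and `F' = φ (P - P*) - φ ν' (V - V*) - φ ν (V* - C)`. Since `V` and `V*`
agree at both ends, `F 0 = F n`, so `∫₀ⁿ F' = 0`, which is the decomposition. The
discount factor `φ` is continuous as the exponential of a primitive of a continuous
function, which makes all three integrands integrable.
-/

open Set intervalIntegral

theorem continuousOn_exp_neg_integral {a b : ℝ} (hab : a ≤ b) {f : ℝ → ℝ}
    (hf : ContinuousOn f (Icc a b)) :
    ContinuousOn (fun t => Real.exp (-∫ r in a..t, f r)) (Icc a b) := by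
  have hprim := continuousOn_primitive_interval (μ := MeasureTheory.volume)
    (by rw [uIcc_of_le hab]; exact hf.integrableOn_compact isCompact_Icc)
  rw [uIcc_of_le hab] at hprim
  exact Real.continuous_exp.comp_continuousOn hprim.neg

theorem integral_eq_zero_of_hasDerivAt_of_eq {a b : ℝ} {F f : ℝ → ℝ}
    (hF : ∀ t ∈ uIcc a b, HasDerivAt F (f t) t)
    (hf : IntervalIntegrable f MeasureTheory.volume a b) (hFab : F a = F b) :
    ∫ t in a..b, f t = 0 := by
  rw [integral_eq_sub_of_hasDerivAt hF hf, hFab, sub_self]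

theorem stmt_16_general (n : ℝ) (hn : 0 < n)
    (δ μ ν ν' P Pstar S C V Vstar φ : ℝ → ℝ)
    (hδ : ContinuousOn δ (Icc 0 n)) (hμ : ContinuousOn μ (Icc 0 n))
    (hν : ContinuousOn ν (Icc 0 n)) (hν' : ContinuousOn ν' (Icc 0 n))
    (hP : ContinuousOn P (Icc 0 n)) (hPstar : ContinuousOn Pstar (Icc 0 n))
    (hC : ContinuousOn C (Icc 0 n))
    (hVcont : ContinuousOn V (Icc 0 n)) (hVstarcont : ContinuousOn Vstar (Icc 0 n))
    (hφ : ∀ t, φ t = Real.exp (-∫ r in (0:ℝ)..t, (δ r + μ r + ν' r)))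
    (hbdry0 : V 0 = Vstar 0) (hbdryn : V n = Vstar n)
    (hdV : ∀ t ∈ Icc (0:ℝ) n,
      HasDerivAt (fun s => φ s * V s)
        (-(φ t) * ν' t * V t + φ t * (P t - μ t * S t)) t)
    (hdVstar : ∀ t ∈ Icc (0:ℝ) n,
      HasDerivAt (fun s => φ s * Vstar s)
        (-(φ t) * (ν' t - ν t) * Vstar t
          + φ t * (Pstar t - μ t * S t - ν t * C t)) t) :
    ∫ t in (0:ℝ)..n, φ t * (P t - Pstar t)
      = (∫ t in (0:ℝ)..n, φ t * ν' t * (V t - Vstar t))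
        + ∫ t in (0:ℝ)..n, φ t * ν t * (Vstar t - C t) := by
  have hφcont : ContinuousOn φ (Icc 0 n) :=
    (continuousOn_exp_neg_integral (f := fun r => δ r + μ r + ν' r) hn.le
      ((hδ.add hμ).add hν')).congr fun t _ => hφ t
  have integrable {f : ℝ → ℝ} (hf : ContinuousOn f (Icc 0 n)) :
      IntervalIntegrable f MeasureTheory.volume 0 n :=
    hf.intervalIntegrable_of_Icc hn.le
  have hpremium := integrable (f := fun t => φ t * (P t - Pstar t)) (hφcont.mul (hP.sub hPstar))
  have hreserve := integrable (f := fun t => φ t * ν' t * (V t - Vstar t))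
    ((hφcont.mul hν').mul (hVcont.sub hVstarcont))
  have hsurrender := integrable (f := fun t => φ t * ν t * (Vstar t - C t))
    ((hφcont.mul hν).mul (hVstarcont.sub hC))
  have hbalance : ∫ t in (0:ℝ)..n, φ t * (P t - Pstar t) - φ t * ν' t * (V t - Vstar t)
      - φ t * ν t * (Vstar t - C t) = 0 := by
    refine integral_eq_zero_of_hasDerivAt_of_eq (F := fun s => φ s * V s - φ s * Vstar s)
      (fun t ht => ?_) ((hpremium.sub hreserve).sub hsurrender)
      (by simp only [hbdry0, hbdryn, sub_self])
    rw [uIcc_of_le hn.le] at ht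
    exact ((hdV t ht).sub (hdVstar t ht)).congr_deriv (by ring)
  rw [integral_sub (hpremium.sub hreserve) hsurrender, integral_sub hpremium hreserve] at hbalance
  linarith

/-- The integration step in the proof of Proposition 1: given the derivative
identities for φ·V and φ·V* and shared boundary values, integrating over the
policy term yields the premium-reduction decomposition. -/
theorem stmt_16 (n : ℝ) (hn : 0 < n)
    (δ μ ν ν' P Pstar S C V Vstar φ : ℝ → ℝ)
    (hδ : ContinuousOn δ (Icc 0 n)) (hμ : ContinuousOn μ (Icc 0 n))
    (hν : ContinuousOn ν (Icc 0 n)) (hν' : ContinuousOn ν' (Icc 0 n))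
    (hP : ContinuousOn P (Icc 0 n)) (hPstar : ContinuousOn Pstar (Icc 0 n))
    (hS : ContinuousOn S (Icc 0 n)) (hC : ContinuousOn C (Icc 0 n))
    (hVcont : ContinuousOn V (Icc 0 n)) (hVstarcont : ContinuousOn Vstar (Icc 0 n))
    (hφ : ∀ t, φ t = Real.exp (-∫ r in (0:ℝ)..t, (δ r + μ r + ν' r)))
    (hbdry0 : V 0 = Vstar 0) (hbdryn : V n = Vstar n)
    (hdV : ∀ t ∈ Icc (0:ℝ) n,
      HasDerivAt (fun s => φ s * V s)
        (-(φ t) * ν' t * V t + φ t * (P t - μ t * S t)) t)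
    (hdVstar : ∀ t ∈ Icc (0:ℝ) n,
      HasDerivAt (fun s => φ s * Vstar s)
        (-(φ t) * (ν' t - ν t) * Vstar t
          + φ t * (Pstar t - μ t * S t - ν t * C t)) t) :
    ∫ t in (0:ℝ)..n, φ t * (P t - Pstar t)
      = (∫ t in (0:ℝ)..n, φ t * ν' t * (V t - Vstar t))
        + ∫ t in (0:ℝ)..n, φ t * ν t * (Vstar t - C t) :=
  stmt_16_general n hn δ μ ν ν' P Pstar S C V Vstar φ hδ hμ hν hν' hP hPstar hC hVcont hVstarcont hφ
    hbdry0 hbdryn hdV hdVstar
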